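/- arXiv:1007.3218 — 5 statements merged into one kernel-verified Lean document; each statement's English description precedes it below -/
import Mathlib

section
/- Let A be a *-algebra, V a complex vector space, X a nonempty set, and K : X × X → S_ℂ(V;A) a positive-definite kernel. Then there exist a complex vector space W, a ℂ-sesquilinear map ⟨·|·⟩ : W × W → A which is positive (i.e. ⟨w|w⟩ ≥ 0 in A for every w ∈ W), and a map D from X into the ℂ-linear maps from V to W, such that K(x,x')(v,v') = ⟨D(x)v | D(x')v'⟩ for all x,x' ∈ X and v,v' ∈ V. -/
/-- An element of a *-algebra is positive if it is a finite sum of elements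
of the form `star a * a`. -/
def AlgPos {A : Type} [NonUnitalNonAssocSemiring A] [Star A] (a : A) : Prop :=
  ∃ (k : ℕ) (f : Fin k → A), a = ∑ i, star (f i) * f i

/-- A ℂ-sesquilinear map `V × V → A`, conjugate-linear in the first argument and
linear in the second. -/
structure IsSesq {V A : Type} [AddCommGroup V] [Module ℂ V] [AddCommGroup A] [Module ℂ A]
    (s : V → V → A) : Prop where
  add_left : ∀ u v w, s (u + v) w = s u w + s v w
  add_right : ∀ u v w, s u (v + w) = s u v + s u w
  smul_left : ∀ (c : ℂ) (v w : V), s (c • v) w = (starRingEnd ℂ) c • s v w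
  smul_right : ∀ (c : ℂ) (v w : V), s v (c • w) = c • s v w

/-- A positive-definite kernel: all the matrices `(K (x i) (x j) (v i) (v j))_{i,j}`
are positive elements of `M_n(A)`. -/
def KernelPosDef {X V A : Type} [AddCommGroup V] [Module ℂ V]
    [NonUnitalNonAssocSemiring A] [Star A]
    (K : X → X → V → V → A) : Prop :=
  ∀ (n : ℕ) (x : Fin n → X) (v : Fin n → V),
    AlgPos (Matrix.of fun i j => K (x i) (x j) (v i) (v j))

/-- A bundled complex vector space. -/
structure CVec : Type 1 where
  W : Type
  [grp : AddCommGroup W]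
  [modC : Module ℂ W]

attribute [instance] CVec.grp CVec.modC

/-! The decomposition lives on the space `X →₀ V` of finitely supported families, with
`⟨f|g⟩ = ∑ x y, K x y (f x) (g y)` and `D x = Finsupp.single x`. Sesquilinearity is inherited from
that of `K`, and `⟨f|f⟩` is the sum of all entries of the positive matrix
`(K xᵢ xⱼ (f xᵢ) (f xⱼ))ᵢⱼ` indexed by the support of `f`. The sum of the entries of `Nᴴ N` is
`∑ₖ rₖ⋆ rₖ` with `rₖ` the row sums of `N`, hence positive. -/

section Positivity

open scoped Matrix

variable {A : Type} [NonUnitalRing A] [StarRing A]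

lemma algPos_sum_star_mul {ι : Type} [Fintype ι] (g : ι → A) :
    AlgPos (∑ i, star (g i) * g i) :=
  ⟨Fintype.card ι, g ∘ (Fintype.equivFin ι).symm,
    ((Fintype.equivFin ι).symm.sum_comp fun i => star (g i) * g i).symm⟩

lemma Matrix.sum_entries_conjTranspose_mul_self {m n : Type} [Fintype m] [Fintype n]
    (N : Matrix m n A) :
    ∑ i, ∑ j, (Nᴴ * N) i j = ∑ k, star (∑ i, N k i) * ∑ j, N k j := by
  simp only [Matrix.mul_apply, Matrix.conjTranspose_apply, star_sum, Finset.sum_mul, Finset.mul_sum]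
  calc ∑ i, ∑ j, ∑ k, star (N k i) * N k j = ∑ i, ∑ k, ∑ j, star (N k i) * N k j :=
        Finset.sum_congr rfl fun _ _ => Finset.sum_comm
    _ = ∑ k, ∑ i, ∑ j, star (N k i) * N k j := Finset.sum_comm
    _ = ∑ k, ∑ j, ∑ i, star (N k i) * N k j := Finset.sum_congr rfl fun _ _ => Finset.sum_comm

lemma AlgPos.sum_entries {n : Type} [Fintype n] {M : Matrix n n A} (hM : AlgPos M) :
    AlgPos (∑ i, ∑ j, M i j) := by
  obtain ⟨p, N, rfl⟩ := hM
  have : ∑ i, ∑ j, (∑ m, star (N m) * N m) i j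
      = ∑ mk : Fin p × n, star (∑ i, N mk.1 mk.2 i) * ∑ j, N mk.1 mk.2 j := by
    simp only [Matrix.sum_apply, Fintype.sum_prod_type, Matrix.star_eq_conjTranspose,
      ← Matrix.sum_entries_conjTranspose_mul_self]
    exact (Finset.sum_congr rfl fun _ _ => Finset.sum_comm).trans Finset.sum_comm
  rw [this]
  exact algPos_sum_star_mul _

end Positivity

section KernelForm

variable {X V A : Type} [AddCommGroup V] [Module ℂ V]

lemma IsSesq.zero_left [AddCommGroup A] [Module ℂ A] {s : V → V → A} (hs : IsSesq s) (w : V) :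
    s 0 w = 0 := by
  simpa using hs.smul_left 0 0 w

lemma IsSesq.zero_right [AddCommGroup A] [Module ℂ A] {s : V → V → A} (hs : IsSesq s) (v : V) :
    s v 0 = 0 := by
  simpa using hs.smul_right 0 v 0

def kernelForm [AddCommMonoid A] (K : X → X → V → V → A) (f g : X →₀ V) : A :=
  f.sum fun x v => g.sum fun y w => K x y v w

variable {K : X → X → V → V → A}

lemma sum_kernel_zero_left [AddCommGroup A] [Module ℂ A] (hK : ∀ x y, IsSesq (K x y)) (x : X)
    (g : X →₀ V) : (g.sum fun y w => K x y 0 w) = 0 := by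
  simp only [(hK _ _).zero_left, Finsupp.sum, Finset.sum_const_zero]

lemma isSesq_kernelForm [AddCommGroup A] [Module ℂ A] (hK : ∀ x y, IsSesq (K x y)) :
    IsSesq (kernelForm K) := by
  refine ⟨fun f f' g => ?_, fun f g g' => ?_, fun c f g => ?_, fun c f g => ?_⟩
  · refine Finsupp.sum_add_index' (fun x => sum_kernel_zero_left hK x g) fun x v v' => ?_
    rw [← Finsupp.sum_add]
    exact Finsupp.sum_congr fun y _ => (hK x y).add_left v v' (g y)
  · rw [kernelForm, kernelForm, kernelForm, ← Finsupp.sum_add]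
    refine Finsupp.sum_congr fun x _ => ?_
    exact Finsupp.sum_add_index' (fun y => (hK x y).zero_right (f x))
      fun y => (hK x y).add_right (f x)
  · rw [kernelForm, kernelForm, Finsupp.sum_smul_index' fun x => sum_kernel_zero_left hK x g,
      Finsupp.smul_sum]
    refine Finsupp.sum_congr fun x _ => ?_
    rw [Finsupp.smul_sum]
    exact Finsupp.sum_congr fun y _ => (hK x y).smul_left c (f x) (g y)
  · rw [kernelForm, kernelForm, Finsupp.smul_sum]
    refine Finsupp.sum_congr fun x _ => ?_
    rw [Finsupp.sum_smul_index' fun y => (hK x y).zero_right (f x), Finsupp.smul_sum]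
    exact Finsupp.sum_congr fun y _ => (hK x y).smul_right c (f x) (g y)

lemma kernelForm_single_single [AddCommGroup A] [Module ℂ A] (hK : ∀ x y, IsSesq (K x y))
    (x y : X) (v w : V) :
    kernelForm K (Finsupp.single x v) (Finsupp.single y w) = K x y v w := by
  rw [kernelForm, Finsupp.sum_single_index, Finsupp.sum_single_index]
  · exact (hK x y).zero_right v
  · exact sum_kernel_zero_left hK x _

lemma algPos_kernelForm_self [NonUnitalRing A] [StarRing A] (hK : KernelPosDef K) (f : X →₀ V) :
    AlgPos (kernelForm K f f) := by
  let e := f.support.equivFin.symm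
  have : kernelForm K f f = ∑ i, ∑ j, K (e i) (e j) (f (e i)) (f (e j)) := by
    simp only [kernelForm, Finsupp.sum, ← Finset.sum_coe_sort f.support, ← e.sum_comp]
  rw [this]
  exact (hK _ (fun i => e i) fun i => f (e i)).sum_entries

end KernelForm

theorem statement0_general (A V X : Type)
    [NonUnitalRing A] [Module ℂ A] [StarRing A]
    [AddCommGroup V] [Module ℂ V]
    (K : X → X → V → V → A) (hsesq : ∀ x x', IsSesq (K x x'))
    (hpos : KernelPosDef K) :
    ∃ (Wb : CVec) (inn : Wb.W → Wb.W → A) (D : X → V →ₗ[ℂ] Wb.W),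
      IsSesq inn ∧ (∀ w, AlgPos (inn w w)) ∧
      ∀ x x' v v', K x x' v v' = inn (D x v) (D x' v') :=
  ⟨⟨X →₀ V⟩, kernelForm K, Finsupp.lsingle, isSesq_kernelForm hsesq,
    algPos_kernelForm_self hpos, fun x x' v v' => (kernelForm_single_single hsesq x x' v v').symm⟩

/-- Kolmogorov decomposition for positive-definite kernels with values in spaces of
sesquilinear maps with values in a *-algebra. -/
theorem statement0 (A V X : Type)
    [NonUnitalRing A] [Module ℂ A] [StarRing A] [StarModule ℂ A]
    [SMulCommClass ℂ A A] [IsScalarTower ℂ A A]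
    [AddCommGroup V] [Module ℂ V] [Nonempty X]
    (K : X → X → V → V → A) (hsesq : ∀ x x', IsSesq (K x x'))
    (hpos : KernelPosDef K) :
    ∃ (Wb : CVec) (inn : Wb.W → Wb.W → A) (D : X → V →ₗ[ℂ] Wb.W),
      IsSesq inn ∧ (∀ w, AlgPos (inn w w)) ∧
      ∀ x x' v v', K x x' v v' = inn (D x v) (D x' v') :=
  statement0_general A V X K hsesq hpos
end

section
/- Let A be a C*-algebra, V a right A-module, X a nonempty set, and K : X × X → S_A(V) a positive-definite A-kernel. Suppose (M,D) and (M',D') are two minimal Kolmogorov decompositions for K, i.e. M and M' are Hilbert C*-modules over A, D : X → Lin_A(V,M) and D' : X → Lin_A(V,M') satisfy K(x,x')(v,v') = ⟨D(x)v | D(x')v'⟩ and K(x,x')(v,v') = ⟨D'(x)v | D'(x')v'⟩ for all x,x' ∈ X, v,v' ∈ V, and the ℂ-linear spans of ⋃_{x∈X} D(x)V and of ⋃_{x∈X} D'(x)V are dense in M and in M' respectively. Then there exists a unitary U : M → M' such that U(D(x)v) = D'(x)v for all x ∈ X and v ∈ V. -/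
/-- A right module structure (over an algebra `A`) on a complex vector space. -/
structure IsRightModule (A : Type) {V : Type} [NonUnitalRing A] [Module ℂ A]
    [AddCommGroup V] [Module ℂ V] (sm : V → A → V) : Prop where
  add_sm : ∀ v w a, sm (v + w) a = sm v a + sm w a
  sm_add : ∀ v a b, sm v (a + b) = sm v a + sm v b
  sm_mul : ∀ v a b, sm v (a * b) = sm (sm v a) b
  smul_sm : ∀ (c : ℂ) v a, c • sm v a = sm (c • v) a
  sm_smul : ∀ (c : ℂ) v a, c • sm v a = sm v (c • a)

/-- An `A`-sesquilinear map on a right `A`-module `V`. -/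
structure IsASesq {A V : Type} [NonUnitalRing A] [Module ℂ A] [StarRing A]
    [AddCommGroup V] [Module ℂ V] (sm : V → A → V) (s : V → V → A) : Prop where
  sesq : IsSesq s
  sm_left : ∀ v v' a, s (sm v a) v' = star a * s v v'
  sm_right : ∀ v v' a, s v (sm v' a) = s v v' * a

variable (A : Type) [NonUnitalCStarAlgebra A] [PartialOrder A] [StarOrderedRing A]

/-- A bundled Hilbert C*-module over the C*-algebra `A`: a right `A`-module with an
`A`-valued inner product, complete in the norm `m ↦ ‖⟨m|m⟩‖^(1/2)` (completeness is
expressed via Cauchy sequences, with `‖⟨d|d⟩‖ < ε` equivalent to `‖⟨d|d⟩‖^(1/2) < ε^(1/2)`). -/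
structure HilbertCStarModule : Type 1 where
  M : Type
  [grp : AddCommGroup M]
  [modC : Module ℂ M]
  sm : M → A → M
  rightModule : IsRightModule A sm
  inner : M → M → A
  inner_nonneg : ∀ m, 0 ≤ inner m m
  inner_definite : ∀ m, inner m m = 0 → m = 0
  inner_add_right : ∀ m m' m'', inner m (m' + m'') = inner m m' + inner m m''
  inner_smul_right : ∀ (c : ℂ) m m', inner m (c • m') = c • inner m m'
  inner_sm_right : ∀ m m' a, inner m (sm m' a) = inner m m' * a
  inner_conj : ∀ m m', inner m m' = star (inner m' m)
  complete : ∀ u : ℕ → M,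
    (∀ ε : ℝ, 0 < ε → ∃ N, ∀ j ≥ N, ∀ k ≥ N, ‖inner (u j - u k) (u j - u k)‖ < ε) →
    ∃ m, ∀ ε : ℝ, 0 < ε → ∃ N, ∀ k ≥ N, ‖inner (u k - m) (u k - m)‖ < ε

attribute [instance] HilbertCStarModule.grp HilbertCStarModule.modC

variable {A}

/-- Density of a subset of a Hilbert C*-module with respect to the norm
`m ↦ ‖⟨m|m⟩‖^(1/2)`. -/
def DenseIn (H : HilbertCStarModule A) (S : Set H.M) : Prop :=
  ∀ m : H.M, ∀ ε : ℝ, 0 < ε → ∃ w ∈ S, ‖H.inner (m - w) (m - w)‖ < ε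

/-- `f : V → M` is ℂ-linear and `A`-linear, i.e. `f ∈ Lin_A(V,M)`. -/
structure IsLinAMap {V M : Type} [AddCommGroup V] [Module ℂ V] [AddCommGroup M] [Module ℂ M]
    (smV : V → A → V) (smM : M → A → M) (f : V → M) : Prop where
  map_add : ∀ v w, f (v + w) = f v + f w
  map_smul : ∀ (c : ℂ) v, f (c • v) = c • f v
  map_sm : ∀ v a, f (smV v a) = smM (f v) a

/-- A unitary map between Hilbert C*-modules over `A`: a bijective, ℂ-linear and
`A`-linear map preserving inner products. -/
structure IsUnitary (H H' : HilbertCStarModule A) (U : H.M → H'.M) : Prop where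
  bijective : Function.Bijective U
  linA : IsLinAMap H.sm H'.sm U
  inner_map : ∀ m m'', H'.inner (U m) (U m'') = H.inner m m''

lemma Isometry.surjective_of_denseRange {α β : Type*} [EMetricSpace α] [CompleteSpace α]
    [EMetricSpace β] {f : α → β} (hf : Isometry f) (hd : DenseRange f) : Function.Surjective f := by
  rw [← Set.range_eq_univ, ← hd.closure_range, hf.isClosedEmbedding.isClosed_range.closure_eq]

lemma LinearMap.bijective_restrict_of_norm_eq {R E F : Type*} [Ring R] [NormedAddCommGroup E]
    [Module R E] [NormedAddCommGroup F] [Module R F] (Γ : Submodule R E) [CompleteSpace Γ]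
    (π : E →ₗ[R] F) (hπ : ∀ p ∈ Γ, ‖π p‖ = ‖p‖) (hd : Dense (Γ.map π : Set F)) :
    Function.Bijective fun p : Γ => π p := by
  have hiso : Isometry (π.comp Γ.subtype) :=
    AddMonoidHomClass.isometry_of_norm _ fun p => hπ p p.2
  refine ⟨hiso.injective, hiso.surjective_of_denseRange ?_⟩
  rwa [DenseRange, ← LinearMap.coe_range, LinearMap.range_comp, Submodule.range_subtype]

section

variable {A : Type} [NonUnitalCStarAlgebra A] [PartialOrder A]

namespace HilbertCStarModule

variable (H : HilbertCStarModule A)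

lemma inner_add_left (m n p : H.M) : H.inner (m + n) p = H.inner m p + H.inner n p := by
  rw [H.inner_conj, H.inner_add_right, star_add, ← H.inner_conj, ← H.inner_conj]

lemma inner_smul_left (c : ℂ) (m n : H.M) :
    H.inner (c • m) n = (starRingEnd ℂ) c • H.inner m n := by
  rw [H.inner_conj, H.inner_smul_right, star_smul, ← H.inner_conj, starRingEnd_apply]

lemma inner_sm_left (m n : H.M) (a : A) : H.inner (H.sm m a) n = star a * H.inner m n := by
  rw [H.inner_conj, H.inner_sm_right, star_mul, ← H.inner_conj]

noncomputable def innerₛₗ : H.M →ₗ⋆[ℂ] H.M →ₗ[ℂ] A :=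
  LinearMap.mk₂'ₛₗ (starRingEnd ℂ) (RingHom.id ℂ) H.inner H.inner_add_left H.inner_smul_left
    H.inner_add_right H.inner_smul_right

lemma innerₛₗ_apply (m n : H.M) : H.innerₛₗ m n = H.inner m n := rfl

lemma inner_sub_left (m n p : H.M) : H.inner (m - n) p = H.inner m p - H.inner n p := by
  simp [← innerₛₗ_apply]

lemma inner_sub_right (m n p : H.M) : H.inner m (n - p) = H.inner m n - H.inner m p := by
  simp [← innerₛₗ_apply]

lemma inner_zero_right (m : H.M) : H.inner m 0 = 0 := by
  simp [← innerₛₗ_apply]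

lemma ext_inner_left {m m' : H.M} (h : ∀ p, H.inner p m = H.inner p m') : m = m' := by
  rw [← sub_eq_zero]
  apply H.inner_definite
  rw [H.inner_sub_right, h, sub_self]

noncomputable instance : Norm H.M := ⟨fun m => √‖H.inner m m‖⟩

lemma norm_def (m : H.M) : ‖m‖ = √‖H.inner m m‖ := rfl

lemma norm_sq_eq (m : H.M) : ‖m‖ ^ 2 = ‖H.inner m m‖ := Real.sq_sqrt (norm_nonneg _)

protected lemma norm_nonneg (m : H.M) : 0 ≤ ‖m‖ := Real.sqrt_nonneg _

protected lemma norm_eq_zero_iff (m : H.M) : ‖m‖ = 0 ↔ m = 0 := by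
  refine ⟨fun h => H.inner_definite m ?_, fun h => ?_⟩
  · rw [← norm_eq_zero, ← H.norm_sq_eq, h, sq, zero_mul]
  · rw [h, norm_def, H.inner_zero_right, norm_zero, Real.sqrt_zero]

end HilbertCStarModule

variable {H H' : HilbertCStarModule A}

/-- The inner product determines the module structure, so an inner-product-preserving surjection
is automatically ℂ-linear, `A`-linear and injective. -/
lemma IsUnitary.of_surjective_of_inner_map {U : H.M → H'.M} (hU : Function.Surjective U)
    (hinner : ∀ m n, H'.inner (U m) (U n) = H.inner m n) : IsUnitary H H' U := by
  have ext_image {m' n' : H'.M} (h : ∀ p, H'.inner (U p) m' = H'.inner (U p) n') : m' = n' :=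
    H'.ext_inner_left fun q => by obtain ⟨p, rfl⟩ := hU q; exact h p
  refine ⟨⟨fun m n hmn => H.ext_inner_left fun p => ?_, hU⟩, ⟨?_, ?_, ?_⟩, hinner⟩
  · rw [← hinner, hmn, hinner]
  · intro m n
    refine ext_image fun p => ?_
    rw [H'.inner_add_right, hinner, hinner, hinner, H.inner_add_right]
  · intro c m
    refine ext_image fun p => ?_
    rw [H'.inner_smul_right, hinner, hinner, H.inner_smul_right]
  · intro m a
    refine ext_image fun p => ?_
    rw [H'.inner_sm_right, hinner, hinner, H.inner_sm_right]

lemma inner_eq_of_mem_span_graph {ι : Type*} {f : ι → H.M} {g : ι → H'.M}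
    (hfg : ∀ i j, H'.inner (g i) (g j) = H.inner (f i) (f j)) {p q : H.M × H'.M}
    (hp : p ∈ Submodule.span ℂ (Set.range fun i => (f i, g i)))
    (hq : q ∈ Submodule.span ℂ (Set.range fun i => (f i, g i))) :
    H'.inner p.2 q.2 = H.inner p.1 q.1 := by
  have eqOn_span {p : H.M × H'.M} (hp : ∀ i, H'.inner p.2 (g i) = H.inner p.1 (f i))
      {q : H.M × H'.M} (hq : q ∈ Submodule.span ℂ (Set.range fun i => (f i, g i))) :
      H'.inner q.2 p.2 = H.inner q.1 p.1 := by
    rw [H'.inner_conj, H.inner_conj]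
    congr 1
    refine LinearMap.eqOn_span' (f := (H'.innerₛₗ p.2).comp (LinearMap.snd ℂ H.M H'.M))
      (g := (H.innerₛₗ p.1).comp (LinearMap.fst ℂ H.M H'.M)) ?_ hq
    rintro _ ⟨i, rfl⟩
    exact hp i
  exact eqOn_span (fun j => eqOn_span (p := (f j, g j)) (fun i => hfg j i) hq) hp

variable [StarOrderedRing A]

namespace HilbertCStarModule

variable (H : HilbertCStarModule A)

lemma inner_mul_inner_swap_le (x y : H.M) :
    H.inner y x * H.inner x y ≤ ‖x‖ ^ 2 • H.inner y y := by
  rcases eq_or_ne x 0 with rfl | hx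
  · simp [(H.norm_eq_zero_iff 0).mpr rfl, H.inner_zero_right]
  set t := ‖x‖ ^ 2
  have ht : 0 < t := by
    have := (H.norm_eq_zero_iff x).not.mpr hx
    positivity
  set a := H.inner x y
  have hstar : star a = H.inner y x := (H.inner_conj y x).symm
  have hconj : star a * H.inner x x * a ≤ t • (star a * a) := by
    rw [show t = ‖H.inner x x‖ from H.norm_sq_eq x]
    exact CStarAlgebra.star_left_conjugate_le_norm_smul (IsSelfAdjoint.of_nonneg (H.inner_nonneg x))
  have hexpand : H.inner (H.sm x a - (t : ℂ) • y) (H.sm x a - (t : ℂ) • y)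
      = star a * H.inner x x * a - t • (star a * a) - t • (star a * a) + t • t • H.inner y y := by
    simp only [H.inner_sub_left, H.inner_sub_right, H.inner_sm_left, H.inner_sm_right,
      H.inner_smul_left, H.inner_smul_right, Complex.conj_ofReal]
    simp only [Complex.coe_smul, smul_mul_assoc, mul_smul_comm, mul_assoc, ← hstar]
    abel
  have hsum := add_nonneg (hexpand ▸ H.inner_nonneg (H.sm x a - (t : ℂ) • y))
    (sub_nonneg.mpr hconj)
  rw [← hstar, ← smul_le_smul_iff_of_pos_left ht, ← sub_nonneg]
  convert hsum using 1
  abel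

lemma norm_inner_le (x y : H.M) : ‖H.inner x y‖ ≤ ‖x‖ * ‖y‖ := by
  have hsq : ‖H.inner x y‖ ^ 2 ≤ (‖x‖ * ‖y‖) ^ 2 := calc
    ‖H.inner x y‖ ^ 2 = ‖H.inner y x * H.inner x y‖ := by
      rw [H.inner_conj y x, CStarRing.norm_star_mul_self, sq]
    _ ≤ ‖‖x‖ ^ 2 • H.inner y y‖ := by
      refine CStarAlgebra.norm_le_norm_of_nonneg_of_le ?_ (H.inner_mul_inner_swap_le x y)
      rw [H.inner_conj y x]
      exact star_mul_self_nonneg _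
    _ = (‖x‖ * ‖y‖) ^ 2 := by
      rw [norm_smul, norm_pow, Real.norm_of_nonneg (H.norm_nonneg x), ← H.norm_sq_eq, mul_pow]
  exact (pow_le_pow_iff_left₀ (norm_nonneg _) (mul_nonneg (H.norm_nonneg x) (H.norm_nonneg y))
    two_ne_zero).mp hsq

protected lemma norm_add_le (x y : H.M) : ‖x + y‖ ≤ ‖x‖ + ‖y‖ := by
  have hsq : ‖x + y‖ ^ 2 ≤ (‖x‖ + ‖y‖) ^ 2 := calc
    ‖x + y‖ ^ 2 ≤ ‖H.inner x x‖ + ‖H.inner x y‖ + ‖H.inner y x‖ + ‖H.inner y y‖ := by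
      rw [H.norm_sq_eq, H.inner_add_left, H.inner_add_right, H.inner_add_right, ← add_assoc]
      exact (norm_add_le _ _).trans (add_le_add_left (norm_add₃_le) _)
    _ ≤ ‖x‖ ^ 2 + ‖x‖ * ‖y‖ + ‖y‖ * ‖x‖ + ‖y‖ ^ 2 := by
      rw [H.norm_sq_eq, H.norm_sq_eq]
      gcongr <;> exact H.norm_inner_le _ _
    _ = (‖x‖ + ‖y‖) ^ 2 := by ring
  exact (pow_le_pow_iff_left₀ (H.norm_nonneg _) (add_nonneg (H.norm_nonneg x) (H.norm_nonneg y))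
    two_ne_zero).mp hsq

lemma normedSpaceCore : NormedSpace.Core ℂ H.M where
  norm_nonneg := H.norm_nonneg
  norm_smul c m := by
    rw [norm_def, norm_def, H.inner_smul_left, H.inner_smul_right, smul_smul, norm_smul,
      norm_mul, Complex.norm_conj, Real.sqrt_mul (by positivity), Real.sqrt_mul_self (norm_nonneg c)]
  norm_triangle := H.norm_add_le
  norm_eq_zero_iff := H.norm_eq_zero_iff

-- Not global instances: they would give a second route to the `AddCommGroup` and `Module ℂ`
-- structures of `H.M`.
noncomputable abbrev normedAddCommGroup : NormedAddCommGroup H.M :=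
  .ofCore H.normedSpaceCore

attribute [local instance] normedAddCommGroup

noncomputable abbrev normedSpace : NormedSpace ℂ H.M := .ofCore H.normedSpaceCore

attribute [local instance] normedSpace

lemma dist_lt_iff (m n : H.M) {ε : ℝ} (hε : 0 < ε) :
    dist m n < ε ↔ ‖H.inner (m - n) (m - n)‖ < ε ^ 2 := by
  rw [dist_eq_norm, ← Real.sqrt_lt' hε]
  rfl

instance completeSpace : CompleteSpace H.M := by
  refine Metric.complete_of_cauchySeq_tendsto fun u hu => ?_
  obtain ⟨m, hm⟩ := H.complete u fun ε hε => by
    obtain ⟨N, hN⟩ := Metric.cauchySeq_iff.mp hu (√ε) (Real.sqrt_pos.mpr hε)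
    refine ⟨N, fun j hj k hk => ?_⟩
    simpa [H.dist_lt_iff _ _ (Real.sqrt_pos.mpr hε), Real.sq_sqrt hε.le] using hN j hj k hk
  refine ⟨m, Metric.tendsto_atTop.mpr fun ε hε => ?_⟩
  obtain ⟨N, hN⟩ := hm (ε ^ 2) (by positivity)
  exact ⟨N, fun k hk => (H.dist_lt_iff _ _ hε).mpr (hN k hk)⟩

lemma _root_.DenseIn.dense {S : Set H.M} (hS : DenseIn H S) : Dense S := by
  refine Metric.dense_iff.mpr fun m r hr => ?_
  obtain ⟨w, hw, hmw⟩ := hS m (r ^ 2) (by positivity)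
  exact ⟨w, Metric.mem_ball'.mpr ((H.dist_lt_iff _ _ hr).mpr hmw), hw⟩

lemma continuous_inner {α : Type*} [TopologicalSpace α] {u v : α → H.M} (hu : Continuous u)
    (hv : Continuous v) : Continuous fun x => H.inner (u x) (v x) := by
  have bound (x y : H.M) : ‖H.innerₛₗ x y‖ ≤ 1 * ‖x‖ * ‖y‖ := by
    simpa [innerₛₗ_apply] using H.norm_inner_le x y
  change Continuous fun x => H.innerₛₗ.mkContinuous₂ 1 bound (u x) (v x)
  fun_prop

theorem exists_unitary_of_inner_eq {ι : Type*} {H H' : HilbertCStarModule A} (f : ι → H.M)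
    (g : ι → H'.M) (hfg : ∀ i j, H'.inner (g i) (g j) = H.inner (f i) (f j))
    (hf : DenseIn H (Submodule.span ℂ (Set.range f)))
    (hg : DenseIn H' (Submodule.span ℂ (Set.range g))) :
    ∃ U : H.M → H'.M, IsUnitary H H' U ∧ ∀ i, U (f i) = g i := by
  set R := Submodule.span ℂ (Set.range fun i => (f i, g i))
  set Γ := R.topologicalClosure
  have hΓ : ∀ p ∈ Γ, ∀ q ∈ Γ, H'.inner p.2 q.2 = H.inner p.1 q.1 := by
    have hR : Set.EqOn (fun pq : (H.M × H'.M) × (H.M × H'.M) => H'.inner pq.1.2 pq.2.2)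
        (fun pq => H.inner pq.1.1 pq.2.1) (R ×ˢ R) := fun pq hpq =>
      inner_eq_of_mem_span_graph hfg hpq.1 hpq.2
    have hclosure := hR.closure (H'.continuous_inner (by fun_prop) (by fun_prop))
      (H.continuous_inner (by fun_prop) (by fun_prop))
    rw [closure_prod_eq] at hclosure
    exact fun p hp q hq => hclosure (x := (p, q)) ⟨hp, hq⟩
  have hnorm : ∀ p ∈ Γ, ‖p.2‖ = ‖p.1‖ := fun p hp => by
    rw [norm_def, norm_def, hΓ p hp p hp]
  have hspan_le {F : Type} [AddCommGroup F] [Module ℂ F] (π : H.M × H'.M →ₗ[ℂ] F) :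
      Submodule.span ℂ (Set.range (π ∘ fun i => (f i, g i))) ≤ Γ.map π := by
    rw [Set.range_comp, ← Submodule.map_span]
    exact Submodule.map_mono R.le_topologicalClosure
  have hfst : Function.Bijective fun p : Γ => (p : H.M × H'.M).1 :=
    (LinearMap.fst ℂ H.M H'.M).bijective_restrict_of_norm_eq Γ
      (fun p hp => by rw [Prod.norm_def, hnorm p hp, max_self]; rfl)
      (hf.dense.mono (hspan_le (LinearMap.fst ℂ H.M H'.M)))
  have hsnd : Function.Bijective fun p : Γ => (p : H.M × H'.M).2 :=
    (LinearMap.snd ℂ H.M H'.M).bijective_restrict_of_norm_eq Γ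
      (fun p hp => by rw [Prod.norm_def, ← hnorm p hp, max_self]; rfl)
      (hg.dense.mono (hspan_le (LinearMap.snd ℂ H.M H'.M)))
  let e := Equiv.ofBijective _ hfst
  have he (m : H.M) : (e.symm m : H.M × H'.M).1 = m := e.apply_symm_apply m
  refine ⟨fun m => (e.symm m : H.M × H'.M).2,
    IsUnitary.of_surjective_of_inner_map (hsnd.2.comp e.symm.surjective) fun m n => ?_, fun i => ?_⟩
  · rw [hΓ _ (e.symm m).2 _ (e.symm n).2, he, he]
  · have hi : (f i, g i) ∈ Γ := R.le_topologicalClosure (Submodule.subset_span ⟨i, rfl⟩)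
    simp only [show e.symm (f i) = ⟨_, hi⟩ from e.symm_apply_eq.mpr rfl]

end HilbertCStarModule

end

theorem statement2_general (V X : Type) (K : X → X → V → V → A)
    (H H' : HilbertCStarModule A) (D : X → V → H.M) (D' : X → V → H'.M)
    (hKD : ∀ x x' v v', K x x' v v' = H.inner (D x v) (D x' v'))
    (hKD' : ∀ x x' v v', K x x' v v' = H'.inner (D' x v) (D' x' v'))
    (hdense : DenseIn H (Submodule.span ℂ (⋃ x : X, Set.range (D x)) : Submodule ℂ H.M))
    (hdense' : DenseIn H' (Submodule.span ℂ (⋃ x : X, Set.range (D' x)) : Submodule ℂ H'.M)) :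
    ∃ U : H.M → H'.M, IsUnitary H H' U ∧ ∀ x v, U (D x v) = D' x v := by
  have hrange {M : Type} (E : X → V → M) :
      Set.range (fun p : X × V => E p.1 p.2) = ⋃ x, Set.range (E x) := by
    ext
    simp
  obtain ⟨U, hU, hUD⟩ := HilbertCStarModule.exists_unitary_of_inner_eq
    (fun p : X × V => D p.1 p.2) (fun p => D' p.1 p.2) (fun p q => by rw [← hKD', ← hKD])
    (by rwa [hrange]) (by rwa [hrange])
  exact ⟨U, hU, fun x v => hUD (x, v)⟩

/-- Uniqueness (up to a unitary) of minimal Kolmogorov decompositions for a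
positive-definite `A`-kernel. -/
theorem statement2 (V X : Type) [AddCommGroup V] [Module ℂ V] [Nonempty X]
    (smV : V → A → V) (hV : IsRightModule A smV)
    (K : X → X → V → V → A) (hsesq : ∀ x x', IsASesq smV (K x x'))
    (hpos : KernelPosDef K)
    (H H' : HilbertCStarModule A) (D : X → V → H.M) (D' : X → V → H'.M)
    (hD : ∀ x, IsLinAMap smV H.sm (D x)) (hD' : ∀ x, IsLinAMap smV H'.sm (D' x))
    (hKD : ∀ x x' v v', K x x' v v' = H.inner (D x v) (D x' v'))
    (hKD' : ∀ x x' v v', K x x' v v' = H'.inner (D' x v) (D' x' v'))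
    (hdense : DenseIn H (Submodule.span ℂ (⋃ x : X, Set.range (D x)) : Submodule ℂ H.M))
    (hdense' : DenseIn H' (Submodule.span ℂ (⋃ x : X, Set.range (D' x)) : Submodule ℂ H'.M)) :
    ∃ U : H.M → H'.M, IsUnitary H H' U ∧ ∀ x v, U (D x v) = D' x v :=
  statement2_general V X K H H' D D' hKD hKD' hdense hdense'
end

section
/- Let A be a C*-algebra, V a right A-module, B a unital C*-algebra, and E : B → S_A(V) a completely positive map. Then there exist a Hilbert C*-module M over A, a unital *-homomorphism π : B → L_A(M) (i.e. π(1_B) = id_M), and a map J ∈ Lin_A(V,M) such that (i) E(b)(v,v') = ⟨Jv | π(b)Jv'⟩ for all b ∈ B and v,v' ∈ V, and (ii) the ℂ-linear span of {π(b)Jv : b ∈ B, v ∈ V} is dense in M. -/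
variable (A : Type) [NonUnitalCStarAlgebra A] [PartialOrder A] [StarOrderedRing A]

variable {A}

/-- Complete positivity of a ℂ-linear map `E : B → S_A(V)`: for every positive matrix
`(b_ij) ∈ M_n(B)` and all `v_1,…,v_n ∈ V`, the matrix `(E(b_ij)(v_i,v_j))_{i,j}` is
positive in `M_n(A)`. -/
def CompPos {B V A : Type} [NonUnitalRing B] [StarRing B]
    [AddCommGroup V] [Module ℂ V] [NonUnitalRing A] [StarRing A]
    (E : B → V → V → A) : Prop :=
  ∀ (n : ℕ) (b : Matrix (Fin n) (Fin n) B), AlgPos b →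
    ∀ v : Fin n → V, AlgPos (Matrix.of fun i j => E (b i j) (v i) (v j))

/-- ℂ-linearity of `E : B → S(V;A)`. -/
structure IsLinearSesqValued {B V A : Type} [AddCommGroup B] [Module ℂ B]
    [AddCommGroup V] [Module ℂ V] [AddCommGroup A] [Module ℂ A]
    (E : B → V → V → A) : Prop where
  map_add : ∀ b b' v v', E (b + b') v v' = E b v v' + E b' v v'
  map_smul : ∀ (c : ℂ) b v v', E (c • b) v v' = c • E b v v'

/-- `π b` is adjointable with adjoint `π (star b)`, `π` is ℂ-linear and multiplicative;
this says precisely that `π : B → L_A(M)` is a *-homomorphism into the adjointable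
operators on `M`. -/
structure IsStarHomIntoAdjointables {B : Type} [NonUnitalRing B] [Module ℂ B] [StarRing B]
    (H : HilbertCStarModule A) (π : B → H.M → H.M) : Prop where
  adjoint : ∀ b m m', H.inner (π b m) m' = H.inner m (π (star b) m')
  map_add : ∀ b b' m, π (b + b') m = π b m + π b' m
  map_smul : ∀ (c : ℂ) b m, π (c • b) m = c • π b m
  map_mul : ∀ b b' m, π (b * b') m = π b (π b' m)


/-!
Equip the algebraic tensor product `B ⊗ V` with the `A`-valued form
`⟨b ⊗ v, b' ⊗ v'⟩ = E (b⋆ b') v v'`. Complete positivity of `E`, applied to Gram matrices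
`(b_i⋆ b_j)`, makes it positive semidefinite; it is compatible with the right `A`-action on `V`,
and left multiplication by `B` acts by operators adjointable with respect to it. The
Cauchy–Schwarz inequality, which needs no definiteness, makes `x ↦ √‖⟨x, x⟩‖` a seminorm, and
the separated completion of `B ⊗ V` is the Hilbert C⋆-module `M`. The `A`-action and the left
multiplications (bounded by `‖b‖` because `‖b‖² - b⋆b` is positive) extend to `M` by
continuity, `J v = 1 ⊗ v`, and `⟨J v | π b (J v')⟩ = E (1⋆ b) v v' = E b v v'`. Minimality holds
because the vectors `π b (J v) = b ⊗ v` span `B ⊗ V`, whose image is dense in `M`.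
-/

open scoped TensorProduct InnerProductSpace

noncomputable section

section AlgPos

variable {R : Type} [NonUnitalSemiring R] [StarRing R]

lemma algPos_gram {n : ℕ} (g : Fin n → R) : AlgPos (Matrix.of fun i j => star (g i) * g j) := by
  cases n with
  | zero => exact ⟨0, Fin.elim0, Subsingleton.elim _ _⟩
  | succ m =>
    refine ⟨1, fun _ => Matrix.of fun r j => if r = 0 then g j else 0, ?_⟩
    ext i j
    simp [Matrix.mul_apply]

variable [PartialOrder R] [StarOrderedRing R]

lemma AlgPos.sum_entries_nonneg {n : ℕ} {M : Matrix (Fin n) (Fin n) R} (h : AlgPos M) :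
    0 ≤ ∑ i, ∑ j, M i j := by
  obtain ⟨k, G, rfl⟩ := h
  -- `∑ i j, (G⋆ G) i j = ∑ m, (∑ i, G m i)⋆ (∑ j, G m j)` for each summand `G`
  simp only [Matrix.sum_apply, Matrix.mul_apply, Matrix.star_apply]
  conv_rhs => enter [2, i]; rw [Finset.sum_comm]
  rw [Finset.sum_comm]
  refine Finset.sum_nonneg fun l _ => ?_
  conv_rhs => enter [2, i]; rw [Finset.sum_comm]
  rw [Finset.sum_comm]
  refine Finset.sum_nonneg fun m _ => ?_
  rw [← Finset.sum_mul_sum, ← star_sum]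
  exact star_mul_self_nonneg _

end AlgPos

lemma star_eq_of_isSelfAdjoint_apply_self {X A : Type} [AddCommGroup X] [Module ℂ X]
    [AddCommGroup A] [Module ℂ A] [StarAddMonoid A] [StarModule ℂ A]
    (f : X →ₗ⋆[ℂ] X →ₗ[ℂ] A) (h : ∀ x, IsSelfAdjoint (f x x)) (x y : X) :
    star (f x y) = f y x := by
  have h1 := (h (x + y)).star_eq
  have h2 := (h (x + Complex.I • y)).star_eq
  simp only [map_add, map_smulₛₗ, LinearMap.add_apply, LinearMap.smul_apply, star_add, star_smul,
    (h x).star_eq, (h y).star_eq, Complex.star_def, Complex.conj_I, neg_smul, smul_add, smul_neg,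
    LinearMap.neg_apply, RingHom.id_apply, star_neg] at h1 h2
  have h2' : star (f y x) - star (f x y) = f x y - f y x := by
    apply smul_right_injective A Complex.I_ne_zero
    simp only [smul_sub]
    linear_combination (norm := module) h2
  linear_combination (norm := module) (1/2 : ℂ) • (h1 - h2')

variable (A) in
/-- Hermitian symmetry is not an axiom: it follows from positivity by polarization
(`PreHilbertCStarModule.star_inner`). -/
structure PreHilbertCStarModule : Type 1 where
  X : Type
  [grp : AddCommGroup X]
  [modC : Module ℂ X]
  sm : X → A → X
  rightModule : IsRightModule A sm
  inner : X →ₗ⋆[ℂ] X →ₗ[ℂ] A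
  inner_nonneg : ∀ x, 0 ≤ inner x x
  inner_sm_right : ∀ x y a, inner x (sm y a) = inner x y * a

attribute [instance] PreHilbertCStarModule.grp PreHilbertCStarModule.modC

namespace PreHilbertCStarModule

variable (P : PreHilbertCStarModule A)

lemma star_inner (x y : P.X) : star (P.inner x y) = P.inner y x :=
  star_eq_of_isSelfAdjoint_apply_self P.inner (fun x => .of_nonneg (P.inner_nonneg x)) x y

lemma inner_sm_left (x y : P.X) (a : A) : P.inner (P.sm x a) y = star a * P.inner x y := by
  rw [← P.star_inner, P.inner_sm_right, star_mul, P.star_inner]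

lemma smul_star_mul_self_le_inner_self (x y : P.X) (t : ℝ) :
    (2 * t - t ^ 2 * ‖P.inner x x‖) • (star (P.inner x y) * P.inner x y) ≤ P.inner y y := by
  set a := P.inner x y
  have hyx : P.inner y x = star a := (P.star_inner x y).symm
  have expand : P.inner ((t : ℂ) • P.sm x a - y) ((t : ℂ) • P.sm x a - y)
      = t ^ 2 • (star a * P.inner x x * a) - (2 * t) • (star a * a) + P.inner y y := by
    simp only [map_sub, map_smulₛₗ, LinearMap.sub_apply, LinearMap.smul_apply, P.inner_sm_left,
      P.inner_sm_right, hyx, Complex.conj_ofReal, RingHom.id_apply, mul_assoc]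
    simp only [Complex.coe_smul]
    module
  have hconj : star a * P.inner x x * a ≤ ‖P.inner x x‖ • (star a * a) :=
    CStarAlgebra.star_left_conjugate_le_norm_smul (.of_nonneg (P.inner_nonneg x))
  have h0 := P.inner_nonneg ((t : ℂ) • P.sm x a - y)
  rw [expand] at h0
  have h1 := smul_le_smul_of_nonneg_left hconj (sq_nonneg t)
  rw [smul_smul] at h1
  rw [sub_smul, ← sub_nonneg]
  convert h0.trans (add_le_add_left (sub_le_sub_right h1 _) _) using 1
  abel

/-- Without definiteness: by the previous lemma the real quadratic `t ↦ r c t² - 2 c t + s` is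
nonnegative on all of `ℝ`, so its discriminant is `≤ 0`. -/
lemma norm_inner_sq_le (x y : P.X) : ‖P.inner x y‖ ^ 2 ≤ ‖P.inner x x‖ * ‖P.inner y y‖ := by
  set c := ‖P.inner x y‖ ^ 2
  set r := ‖P.inner x x‖
  set s := ‖P.inner y y‖
  have quadratic_nonneg : ∀ t : ℝ, 0 ≤ (r * c) * (t * t) + (-2 * c) * t + s := by
    intro t
    rcases le_or_gt 0 (2 * t - t ^ 2 * r) with ht | ht
    · have h := CStarAlgebra.norm_le_norm_of_nonneg_of_le
        (smul_nonneg ht (star_mul_self_nonneg _)) (P.smul_star_mul_self_le_inner_self x y t)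
      rw [norm_smul, CStarRing.norm_star_mul_self, Real.norm_of_nonneg ht, ← sq] at h
      nlinarith
    · nlinarith [sq_nonneg ‖P.inner x y‖, norm_nonneg (P.inner y y)]
  have hd := discrim_le_zero quadratic_nonneg
  rw [discrim] at hd
  rcases (show 0 ≤ c by positivity).eq_or_lt with hc | hc
  · rw [← hc]; positivity
  · nlinarith

/-- Only a seminorm: `UniformSpace.Completion` identifies the null vectors, so no quotient is
taken. -/
instance : Norm P.X := ⟨fun x => √‖P.inner x x‖⟩

instance : Inner A P.X := ⟨fun x y => P.inner x y⟩

lemma norm_sq {A : Type} [NonUnitalCStarAlgebra A] [PartialOrder A] (P : PreHilbertCStarModule A)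
    (x : P.X) : ‖x‖ ^ 2 = ‖P.inner x x‖ :=
  Real.sq_sqrt (norm_nonneg _)

lemma norm_inner_le (x y : P.X) : ‖P.inner x y‖ ≤ ‖x‖ * ‖y‖ := by
  refine (sq_le_sq₀ (norm_nonneg _) (mul_nonneg (Real.sqrt_nonneg _) (Real.sqrt_nonneg _))).mp ?_
  rw [mul_pow, Real.sq_sqrt (norm_nonneg _), Real.sq_sqrt (norm_nonneg _)]
  exact P.norm_inner_sq_le x y

lemma seminormedSpaceCore : SeminormedSpace.Core ℂ P.X where
  norm_nonneg _ := Real.sqrt_nonneg _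
  norm_smul c x := by
    change √‖P.inner (c • x) (c • x)‖ = ‖c‖ * √‖P.inner x x‖
    simp only [map_smulₛₗ, LinearMap.smul_apply, RingHom.id_apply, smul_smul, norm_smul,
      norm_mul, RCLike.norm_conj]
    rw [← sq, Real.sqrt_mul (sq_nonneg _), Real.sqrt_sq (norm_nonneg _)]
  norm_triangle x y := by
    refine (sq_le_sq₀ (Real.sqrt_nonneg _)
      (add_nonneg (Real.sqrt_nonneg _) (Real.sqrt_nonneg _))).mp ?_
    change ‖x + y‖ ^ 2 ≤ (‖x‖ + ‖y‖) ^ 2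
    rw [P.norm_sq]
    simp only [map_add, LinearMap.add_apply]
    have hxy := P.norm_inner_le x y
    have hyx := P.norm_inner_le y x
    have hx := P.norm_sq x
    have hy := P.norm_sq y
    calc _ ≤ ‖P.inner x x‖ + ‖P.inner y x‖ + (‖P.inner x y‖ + ‖P.inner y y‖) :=
          (norm_add_le _ _).trans (add_le_add (norm_add_le _ _) (norm_add_le _ _))
      _ ≤ (‖x‖ + ‖y‖) ^ 2 := by nlinarith

instance : SeminormedAddCommGroup P.X := .ofCore P.seminormedSpaceCore

instance : NormedSpace ℂ P.X where
  norm_smul_le c x := (P.seminormedSpaceCore.norm_smul c x).le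

abbrev Completion : Type := UniformSpace.Completion P.X

abbrev toCompletion (x : P.X) : P.Completion := x

lemma continuous_inner : Continuous fun p : P.X × P.X => P.inner p.1 p.2 := by
  let innerSL : P.X →L⋆[ℂ] P.X →L[ℂ] A :=
    LinearMap.mkContinuous₂ P.inner 1 fun x y => by rw [one_mul]; exact P.norm_inner_le x y
  exact (innerSL.continuous.comp continuous_fst).clm_apply continuous_snd

lemma inner_coe (x y : P.X) : ⟪(x : P.Completion), (y : P.Completion)⟫_A = P.inner x y :=
  (UniformSpace.Completion.isDenseInducing_coe.prodMap
    UniformSpace.Completion.isDenseInducing_coe).extend_eq P.continuous_inner (x, y)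

lemma continuous_inner_completion :
    Continuous fun p : P.Completion × P.Completion => ⟪p.1, p.2⟫_A := by
  let φ : P.X →+ P.X →+ A := AddMonoidHom.mk' (fun x => (P.inner x).toAddMonoidHom)
    fun x y => by ext z; simp
  have de := UniformSpace.Completion.isDenseInducing_toCompl P.X
  exact de.extend_Z_bilin de (φ := φ) P.continuous_inner

@[fun_prop]
lemma _root_.Continuous.inner_completion {α : Type} [TopologicalSpace α] {f g : α → P.Completion}
    (hf : Continuous f) (hg : Continuous g) : Continuous fun t => ⟪f t, g t⟫_A :=
  P.continuous_inner_completion.comp (hf.prodMk hg)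

lemma norm_sq_completion (m : P.Completion) : ‖m‖ ^ 2 = ‖⟪m, m⟫_A‖ := by
  induction m using UniformSpace.Completion.induction_on with
  | hp => exact isClosed_eq (by fun_prop) (by fun_prop)
  | ih x => rw [UniformSpace.Completion.norm_coe, inner_coe, norm_sq]

lemma norm_sm_le (x : P.X) (a : A) : ‖P.sm x a‖ ≤ ‖a‖ * ‖x‖ := by
  refine (sq_le_sq₀ (norm_nonneg _) (by positivity)).mp ?_
  rw [mul_pow, P.norm_sq, P.norm_sq, P.inner_sm_left, P.inner_sm_right, ← mul_assoc]
  calc ‖star a * P.inner x x * a‖ ≤ ‖‖P.inner x x‖ • (star a * a)‖ :=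
        CStarAlgebra.norm_le_norm_of_nonneg_of_le (star_left_conjugate_nonneg (P.inner_nonneg x) a)
          (CStarAlgebra.star_left_conjugate_le_norm_smul (.of_nonneg (P.inner_nonneg x)))
    _ = ‖a‖ ^ 2 * ‖P.inner x x‖ := by
        rw [norm_smul, CStarRing.norm_star_mul_self, Real.norm_of_nonneg (norm_nonneg _)]; ring

lemma uniformContinuous_sm (a : A) : UniformContinuous (P.sm · a) :=
  AddMonoidHomClass.uniformContinuous_of_bound
    (AddMonoidHom.mk' (P.sm · a) fun x y => P.rightModule.add_sm x y a) ‖a‖ (P.norm_sm_le · a)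

def smCompletion (m : P.Completion) (a : A) : P.Completion :=
  UniformSpace.Completion.map (P.sm · a) m

lemma smCompletion_coe (x : P.X) (a : A) : P.smCompletion x a = P.sm x a :=
  UniformSpace.Completion.map_coe (P.uniformContinuous_sm a) x

@[fun_prop]
lemma continuous_smCompletion (a : A) : Continuous (P.smCompletion · a) :=
  UniformSpace.Completion.continuous_map

open UniformSpace.Completion in
lemma isRightModule_smCompletion : IsRightModule A P.smCompletion where
  add_sm m m' a := by
    induction m, m' using induction_on₂ with
    | hp => exact isClosed_eq (by fun_prop) (by fun_prop)
    | ih x y => simp only [← coe_add, smCompletion_coe, P.rightModule.add_sm]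
  sm_add m a b := by
    induction m using induction_on with
    | hp => exact isClosed_eq (by fun_prop) (by fun_prop)
    | ih x => simp only [← coe_add, smCompletion_coe, P.rightModule.sm_add]
  sm_mul m a b := by
    induction m using induction_on with
    | hp => exact isClosed_eq (by fun_prop) (by fun_prop)
    | ih x => simp only [smCompletion_coe, P.rightModule.sm_mul]
  smul_sm c m a := by
    induction m using induction_on with
    | hp =>
      exact isClosed_eq ((P.continuous_smCompletion a).const_smul c)
        ((P.continuous_smCompletion a).comp (continuous_const_smul c))
    | ih x => rw [smCompletion_coe, ← coe_smul, ← coe_smul, smCompletion_coe, P.rightModule.smul_sm]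
  sm_smul c m a := by
    induction m using induction_on with
    | hp => exact isClosed_eq ((P.continuous_smCompletion a).const_smul c) (by fun_prop)
    | ih x => rw [smCompletion_coe, smCompletion_coe, ← coe_smul, P.rightModule.sm_smul]

open UniformSpace.Completion in
lemma inner_smul_right_completion (c : ℂ) (m m' : P.Completion) :
    ⟪m, c • m'⟫_A = c • ⟪m, m'⟫_A := by
  induction m, m' using induction_on₂ with
  | hp =>
    exact isClosed_eq
      (P.continuous_inner_completion.comp (continuous_fst.prodMk (continuous_snd.const_smul c)))
      (P.continuous_inner_completion.const_smul c)
  | ih x y => rw [← coe_smul, inner_coe, inner_coe, map_smul]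

open UniformSpace.Completion in
def completion : HilbertCStarModule A where
  M := P.Completion
  sm := P.smCompletion
  rightModule := P.isRightModule_smCompletion
  inner m m' := ⟪m, m'⟫_A
  inner_nonneg m := by
    induction m using induction_on with
    | hp => exact isClosed_le continuous_const (by fun_prop)
    | ih x => rw [inner_coe]; exact P.inner_nonneg x
  inner_definite m h := by
    rw [← norm_eq_zero, ← sq_eq_zero_iff (M₀ := ℝ), P.norm_sq_completion, h, norm_zero]
  inner_add_right m m' m'' := by
    induction m, m', m'' using induction_on₃ with
    | hp => exact isClosed_eq (by fun_prop) (by fun_prop)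
    | ih x y z => simp only [← coe_add, inner_coe, map_add]
  inner_smul_right := P.inner_smul_right_completion
  inner_sm_right m m' a := by
    induction m, m' using induction_on₂ with
    | hp => exact isClosed_eq (by fun_prop) (by fun_prop)
    | ih x y => rw [smCompletion_coe, inner_coe, inner_coe, P.inner_sm_right]
  inner_conj m m' := by
    induction m, m' using induction_on₂ with
    | hp => exact isClosed_eq (by fun_prop) (by fun_prop)
    | ih x y => rw [inner_coe, inner_coe, P.star_inner]
  complete u h := by
    simp only [← P.norm_sq_completion] at h ⊢
    have hu : CauchySeq u := Metric.cauchySeq_iff.mpr fun δ hδ => by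
      obtain ⟨N, hN⟩ := h (δ ^ 2) (by positivity)
      refine ⟨N, fun j hj k hk => ?_⟩
      rw [dist_eq_norm]
      exact (pow_lt_pow_iff_left₀ (norm_nonneg _) hδ.le two_ne_zero).mp (hN j hj k hk)
    obtain ⟨m, hm⟩ := cauchySeq_tendsto_of_complete hu
    refine ⟨m, fun ε hε => ?_⟩
    obtain ⟨N, hN⟩ := Metric.tendsto_atTop.mp hm (√ε) (Real.sqrt_pos.mpr hε)
    exact ⟨N, fun k hk => by rw [← dist_eq_norm]; exact (Real.lt_sqrt dist_nonneg).mp (hN k hk)⟩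

lemma denseIn_completion {S : Set P.Completion} (hS : ∀ x : P.X, (x : P.Completion) ∈ S) :
    DenseIn P.completion S := by
  intro (m : P.Completion) ε hε
  obtain ⟨_, ⟨x, rfl⟩, hx⟩ := Metric.mem_closure_iff.mp
    (UniformSpace.Completion.denseRange_coe m) (√ε) (Real.sqrt_pos.mpr hε)
  refine ⟨(x : P.Completion), hS x, ?_⟩
  change ‖⟪m - x, m - x⟫_A‖ < ε
  rw [← P.norm_sq_completion, ← dist_eq_norm]
  exact (Real.lt_sqrt dist_nonneg).mp hx

variable {B : Type} [CStarAlgebra B]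

def IsStarRep (ρ : B →ₐ[ℂ] Module.End ℂ P.X) : Prop :=
  ∀ b x y, P.inner (ρ b x) y = P.inner x (ρ (star b) y)

variable {P}

/-- `‖b‖² - b⋆b = d⋆d` in `B`, and `ρ (d⋆d)` is positive since `⟨x, ρ (d⋆d) x⟩ = ⟨ρ d x, ρ d x⟩`. -/
lemma IsStarRep.norm_apply_le {ρ : B →ₐ[ℂ] Module.End ℂ P.X} (hρ : P.IsStarRep ρ) (b : B)
    (x : P.X) : ‖ρ b x‖ ≤ ‖b‖ * ‖x‖ := by
  let _ := CStarAlgebra.spectralOrder B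
  let _ := CStarAlgebra.spectralOrderedRing B
  have inner_apply_nonneg : ∀ c : B, 0 ≤ c → 0 ≤ P.inner x (ρ c x) := by
    intro c hc
    obtain ⟨d, rfl⟩ := CStarAlgebra.nonneg_iff_eq_star_mul_self.mp hc
    rw [map_mul, Module.End.mul_apply, ← hρ]
    exact P.inner_nonneg _
  have hsq : P.inner (ρ b x) (ρ b x) = P.inner x (ρ (star b * b) x) := by
    rw [hρ, map_mul, Module.End.mul_apply]
  have hle : P.inner x (ρ (star b * b) x) ≤ (‖b‖ ^ 2) • P.inner x x := by
    have h := inner_apply_nonneg _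
      (sub_nonneg.mpr (CStarAlgebra.star_mul_le_algebraMap_norm_sq (a := b)))
    rwa [map_sub, LinearMap.sub_apply, map_sub, Algebra.algebraMap_eq_smul_one,
      ← Complex.coe_smul, map_smul, map_one, LinearMap.smul_apply, Module.End.one_apply,
      map_smul, Complex.coe_smul, sub_nonneg] at h
  refine (sq_le_sq₀ (norm_nonneg _) (by positivity)).mp ?_
  rw [mul_pow, P.norm_sq, P.norm_sq, hsq]
  calc ‖P.inner x (ρ (star b * b) x)‖ ≤ ‖(‖b‖ ^ 2) • P.inner x x‖ :=
        CStarAlgebra.norm_le_norm_of_nonneg_of_le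
          (inner_apply_nonneg _ (star_mul_self_nonneg b)) hle
    _ = ‖b‖ ^ 2 * ‖P.inner x x‖ := by rw [norm_smul, Real.norm_of_nonneg (by positivity)]

def completionRep (ρ : B →ₐ[ℂ] Module.End ℂ P.X) (b : B) : P.Completion → P.Completion :=
  UniformSpace.Completion.map (ρ b)

variable {ρ : B →ₐ[ℂ] Module.End ℂ P.X}

@[fun_prop]
lemma continuous_completionRep (b : B) : Continuous (completionRep ρ b) :=
  UniformSpace.Completion.continuous_map

lemma completionRep_coe (hρ : P.IsStarRep ρ) (b : B) (x : P.X) : completionRep ρ b x = ρ b x :=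
  UniformSpace.Completion.map_coe
    (AddMonoidHomClass.uniformContinuous_of_bound (ρ b) ‖b‖ (hρ.norm_apply_le b)) x

open UniformSpace.Completion

lemma inner_completionRep (hρ : P.IsStarRep ρ) (b : B) (m m' : P.Completion) :
    ⟪completionRep ρ b m, m'⟫_A = ⟪m, completionRep ρ (star b) m'⟫_A := by
  induction m, m' using induction_on₂ with
  | hp => exact isClosed_eq (by fun_prop) (by fun_prop)
  | ih x y => rw [completionRep_coe hρ, completionRep_coe hρ, inner_coe, inner_coe, hρ]

lemma completionRep_add (hρ : P.IsStarRep ρ) (b b' : B) (m : P.Completion) :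
    completionRep ρ (b + b') m = completionRep ρ b m + completionRep ρ b' m := by
  induction m using induction_on with
  | hp => exact isClosed_eq (by fun_prop) (by fun_prop)
  | ih x => rw [completionRep_coe hρ, completionRep_coe hρ, completionRep_coe hρ, ← coe_add,
      map_add, LinearMap.add_apply]

lemma completionRep_smul (hρ : P.IsStarRep ρ) (c : ℂ) (b : B) (m : P.Completion) :
    completionRep ρ (c • b) m = c • completionRep ρ b m := by
  induction m using induction_on with
  | hp => exact isClosed_eq (by fun_prop) ((continuous_completionRep b).const_smul c)
  | ih x => rw [completionRep_coe hρ, completionRep_coe hρ, ← coe_smul, map_smul,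
      LinearMap.smul_apply]

lemma completionRep_mul (hρ : P.IsStarRep ρ) (b b' : B) (m : P.Completion) :
    completionRep ρ (b * b') m = completionRep ρ b (completionRep ρ b' m) := by
  induction m using induction_on with
  | hp => exact isClosed_eq (by fun_prop) (by fun_prop)
  | ih x => rw [completionRep_coe hρ, completionRep_coe hρ, completionRep_coe hρ, map_mul,
      Module.End.mul_apply]

lemma completionRep_one (m : P.Completion) : completionRep ρ 1 m = m := by
  rw [completionRep, map_one]
  exact congrFun map_id m

lemma IsStarRep.isStarHomIntoAdjointables_completionRep (hρ : P.IsStarRep ρ) :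
    IsStarHomIntoAdjointables P.completion (completionRep ρ) where
  adjoint := inner_completionRep hρ
  map_add := completionRep_add hρ
  map_smul := completionRep_smul hρ
  map_mul := completionRep_mul hρ

lemma inner_toCompletion_completionRep (hρ : P.IsStarRep ρ) (b : B) (x y : P.X) :
    ⟪P.toCompletion x, completionRep ρ b (P.toCompletion y)⟫_A = P.inner x (ρ b y) := by
  rw [completionRep_coe hρ, inner_coe]

lemma isLinAMap_toCompletion_comp {V : Type} [AddCommGroup V] [Module ℂ V] {smV : V → A → V}
    (J : V →ₗ[ℂ] P.X) (hJ : ∀ v a, J (smV v a) = P.sm (J v) a) :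
    IsLinAMap smV P.completion.sm fun v => P.toCompletion (J v) where
  map_add v w := by rw [map_add]; exact coe_add _ _
  map_smul c v := by rw [map_smul]; exact coe_smul _ _
  map_sm v a := by rw [hJ]; exact (P.smCompletion_coe _ a).symm

lemma denseIn_span_completionRep {V : Type} (hρ : P.IsStarRep ρ) (J : V → P.X)
    (hspan : Submodule.span ℂ {x | ∃ b v, x = ρ b (J v)} = ⊤) :
    DenseIn P.completion ((Submodule.span ℂ
      {m | ∃ b v, m = completionRep ρ b (P.toCompletion (J v))} : Submodule ℂ P.Completion) :
        Set P.Completion) := by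
  have hle : Submodule.span ℂ {x | ∃ b v, x = ρ b (J v)} ≤
      (Submodule.span ℂ {m | ∃ b v, m = completionRep ρ b (P.toCompletion (J v))}).comap
        (toComplL : P.X →L[ℂ] P.Completion).toLinearMap :=
    Submodule.span_le.mpr fun x ⟨b, v, hx⟩ =>
      Submodule.subset_span ⟨b, v, by rw [hx]; exact (completionRep_coe hρ b (J v)).symm⟩
  rw [hspan] at hle
  exact P.denseIn_completion fun x => hle Submodule.mem_top

end PreHilbertCStarModule

section RightModule

variable {R V : Type} [NonUnitalRing R] [Module ℂ R] [AddCommGroup V] [Module ℂ V]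
  {smV : V → R → V}

def IsRightModule.toEnd (hV : IsRightModule R smV) (a : R) : V →ₗ[ℂ] V where
  toFun v := smV v a
  map_add' v w := hV.add_sm v w a
  map_smul' c v := (hV.smul_sm c v a).symm

lemma IsRightModule.lTensor (hV : IsRightModule R smV) (M : Type) [AddCommGroup M] [Module ℂ M] :
    IsRightModule R fun (w : M ⊗[ℂ] V) a => (hV.toEnd a).lTensor M w where
  add_sm w w' a := map_add _ w w'
  sm_add w a b := by
    rw [show hV.toEnd (a + b) = hV.toEnd a + hV.toEnd b from
      LinearMap.ext fun v => hV.sm_add v a b, LinearMap.lTensor_add, LinearMap.add_apply]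
  sm_mul w a b := by
    rw [show hV.toEnd (a * b) = hV.toEnd b ∘ₗ hV.toEnd a from
      LinearMap.ext fun v => hV.sm_mul v a b, LinearMap.lTensor_comp, LinearMap.comp_apply]
  smul_sm c w a := (map_smul _ c w).symm
  sm_smul c w a := by
    rw [show hV.toEnd (c • a) = c • hV.toEnd a from
      LinearMap.ext fun v => (hV.sm_smul c v a).symm, LinearMap.lTensor_smul, LinearMap.smul_apply]

end RightModule

section KSGNS

variable {R B V : Type} [NonUnitalRing R] [StarRing R] [Module ℂ R] [CStarAlgebra B]
  [AddCommGroup V] [Module ℂ V] {smV : V → R → V} {E : B → V → V → R}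
  (hlin : IsLinearSesqValued E) (hsesq : ∀ b, IsASesq smV (E b))

def ksgnsForm : B ⊗[ℂ] V →ₗ⋆[ℂ] B ⊗[ℂ] V →ₗ[ℂ] R :=
  TensorProduct.lift <| LinearMap.mk₂'ₛₗ (starRingEnd ℂ) (starRingEnd ℂ)
    (fun b v => TensorProduct.lift <| LinearMap.mk₂ ℂ (fun b' v' => E (star b * b') v v')
      (fun b₁ b₂ v' => by rw [mul_add, hlin.map_add])
      (fun c b' v' => by rw [mul_smul_comm, hlin.map_smul])
      (fun b' v₁ v₂ => (hsesq _).sesq.add_right v v₁ v₂)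
      (fun c b' v' => (hsesq _).sesq.smul_right c v v'))
    (fun b₁ b₂ v => TensorProduct.ext' fun b' v' => by
      simp only [TensorProduct.lift.tmul, LinearMap.mk₂_apply, LinearMap.add_apply, star_add,
        add_mul, hlin.map_add])
    (fun c b v => TensorProduct.ext' fun b' v' => by
      simp only [TensorProduct.lift.tmul, LinearMap.mk₂_apply, LinearMap.smul_apply, star_smul,
        smul_mul_assoc, hlin.map_smul, Complex.star_def])
    (fun b v₁ v₂ => TensorProduct.ext' fun b' v' => by
      simp only [TensorProduct.lift.tmul, LinearMap.mk₂_apply, LinearMap.add_apply,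
        (hsesq _).sesq.add_left])
    (fun c b v => TensorProduct.ext' fun b' v' => by
      simp only [TensorProduct.lift.tmul, LinearMap.mk₂_apply, LinearMap.smul_apply,
        (hsesq _).sesq.smul_left])

@[simp]
lemma ksgnsForm_tmul (b b' : B) (v v' : V) :
    ksgnsForm hlin hsesq (b ⊗ₜ v) (b' ⊗ₜ v') = E (star b * b') v v' := rfl

lemma ksgnsForm_self_nonneg [PartialOrder R] [StarOrderedRing R] (hcp : CompPos E)
    (w : B ⊗[ℂ] V) : 0 ≤ ksgnsForm hlin hsesq w w := by
  obtain ⟨k, b, v, rfl⟩ := TensorProduct.exists_sum_tmul_eq w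
  have h := (hcp k _ (algPos_gram b) v).sum_entries_nonneg
  simp only [map_sum, LinearMap.sum_apply, ksgnsForm_tmul, Matrix.of_apply] at h ⊢
  rwa [Finset.sum_comm]

lemma ksgnsForm_lTensor (hV : IsRightModule R smV) (x y : B ⊗[ℂ] V) (a : R) :
    ksgnsForm hlin hsesq x ((hV.toEnd a).lTensor B y) = ksgnsForm hlin hsesq x y * a := by
  induction x using TensorProduct.induction_on with
  | zero => simp
  | add x x' hx hx' => simp only [map_add, LinearMap.add_apply, hx, hx', add_mul]
  | tmul b v =>
    induction y using TensorProduct.induction_on with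
    | zero => simp
    | add y y' hy hy' => simp only [map_add, hy, hy', add_mul]
    | tmul b' v' => exact (hsesq _).sm_right v v' a

variable (B V) in
def leftMulRep : B →ₐ[ℂ] Module.End ℂ (B ⊗[ℂ] V) :=
  (Module.End.rTensorAlgHom ℂ B V).comp (Algebra.lmul ℂ B)

@[simp]
lemma leftMulRep_tmul (b b' : B) (v : V) : leftMulRep B V b (b' ⊗ₜ v) = (b * b') ⊗ₜ v := rfl

lemma ksgnsForm_leftMulRep (b : B) (x y : B ⊗[ℂ] V) :
    ksgnsForm hlin hsesq (leftMulRep B V b x) y =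
      ksgnsForm hlin hsesq x (leftMulRep B V (star b) y) := by
  induction x using TensorProduct.induction_on with
  | zero => simp
  | add x x' hx hx' => simp only [map_add, LinearMap.add_apply, hx, hx']
  | tmul b₁ v =>
    induction y using TensorProduct.induction_on with
    | zero => simp
    | add y y' hy hy' => simp only [map_add, hy, hy']
    | tmul b₂ v' => simp only [leftMulRep_tmul, ksgnsForm_tmul, star_mul, mul_assoc]

end KSGNS

def ksgnsPreModule {B V : Type} [CStarAlgebra B] [AddCommGroup V] [Module ℂ V]
    {smV : V → A → V} {E : B → V → V → A} (hlin : IsLinearSesqValued E)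
    (hsesq : ∀ b, IsASesq smV (E b)) (hV : IsRightModule A smV) (hcp : CompPos E) :
    PreHilbertCStarModule A where
  X := B ⊗[ℂ] V
  sm w a := (hV.toEnd a).lTensor B w
  rightModule := hV.lTensor B
  inner := ksgnsForm hlin hsesq
  inner_nonneg := ksgnsForm_self_nonneg hlin hsesq hcp
  inner_sm_right := ksgnsForm_lTensor hlin hsesq hV

end

/-- The generalized KSGNS construction (Theorem 4.3 of the paper): every completely
positive map `E : B → S_A(V)`, with `B` a unital C*-algebra, has a minimal dilation
`(M, π, J)`. -/
theorem statement4 (B V : Type) [CStarAlgebra B]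
    [AddCommGroup V] [Module ℂ V]
    (smV : V → A → V) (hV : IsRightModule A smV)
    (E : B → V → V → A) (hlin : IsLinearSesqValued E)
    (hsesq : ∀ b, IsASesq smV (E b)) (hcp : CompPos E) :
    ∃ (H : HilbertCStarModule A) (π : B → H.M → H.M) (J : V → H.M),
      IsStarHomIntoAdjointables H π ∧
      (∀ m, π 1 m = m) ∧
      IsLinAMap smV H.sm J ∧
      (∀ b v v', E b v v' = H.inner (J v) (π b (J v'))) ∧
      DenseIn H (Submodule.span ℂ {m : H.M | ∃ b v, m = π b (J v)} : Submodule ℂ H.M) := by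
  let P := ksgnsPreModule hlin hsesq hV hcp
  have hρ : P.IsStarRep (leftMulRep B V) := ksgnsForm_leftMulRep hlin hsesq
  let J : V →ₗ[ℂ] P.X := TensorProduct.mk ℂ B V 1
  refine ⟨P.completion, PreHilbertCStarModule.completionRep (leftMulRep B V),
    fun v => P.toCompletion (J v), hρ.isStarHomIntoAdjointables_completionRep,
    PreHilbertCStarModule.completionRep_one, P.isLinAMap_toCompletion_comp J fun v a => rfl,
    fun b v v' => ?_, P.denseIn_span_completionRep hρ J ?_⟩
  · refine Eq.trans ?_
      (PreHilbertCStarModule.inner_toCompletion_completionRep hρ b (J v) (J v')).symm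
    change E b v v' = ksgnsForm hlin hsesq ((1 : B) ⊗ₜ v) ((b * 1) ⊗ₜ v')
    simp
  · refine eq_top_iff.mpr ((TensorProduct.span_tmul_eq_top ℂ B V).ge.trans
      (Submodule.span_mono fun _ ⟨b, v, hbv⟩ => ⟨b, v, ?_⟩))
    rw [← hbv]
    exact congrArg (· ⊗ₜ[ℂ] v) (mul_one b).symm
end

section
/- Let A and B be *-algebras, V a complex vector space, and E : B → S_ℂ(V;A) a ℂ-linear map. Then E is completely positive if and only if the map Ẽ : B × B → S_ℂ(V;A) defined by Ẽ(b,b') = E(b*b') is a positive-definite kernel on the set B. -/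
/-! The forward direction is complete positivity applied to the matrix `(x_i* x_j)`, which is
`M* M` for the matrix `M` whose first row is `x` and whose other rows vanish. Conversely, if
`b = ∑ₘ Mₘ* Mₘ` then `(b_ij)_{ij} = ∑ₘ ∑ₗ ((Mₘ)ₗᵢ* (Mₘ)ₗⱼ)_{ij}`, and additivity of `E` turns the
matrix `(E(b_ij)(v_i, v_j))` into a sum of kernel matrices `(Ẽ(x_i, x_j)(v_i, v_j))` with
`x = (Mₘ)ₗ` a row of `Mₘ`. -/

lemma algPos_zero {A : Type} [NonUnitalNonAssocSemiring A] [Star A] : AlgPos (0 : A) :=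
  ⟨0, ![], by simp⟩

lemma AlgPos.add {A : Type} [NonUnitalNonAssocSemiring A] [Star A] {a b : A}
    (ha : AlgPos a) (hb : AlgPos b) : AlgPos (a + b) := by
  obtain ⟨k, f, rfl⟩ := ha
  obtain ⟨k', f', rfl⟩ := hb
  exact ⟨k + k', Fin.append f f', by simp [Fin.sum_univ_add]⟩

lemma algPos_sum {A ι : Type} [NonUnitalNonAssocSemiring A] [Star A]
    (s : Finset ι) (g : ι → A) (h : ∀ i ∈ s, AlgPos (g i)) : AlgPos (∑ i ∈ s, g i) := by
  classical
  induction s using Finset.induction with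
  | empty => simpa using algPos_zero
  | insert i s hi ih =>
    rw [Finset.sum_insert hi]
    exact (h i (s.mem_insert_self i)).add (ih fun j hj => h j (Finset.mem_insert_of_mem hj))

lemma Matrix.algPos_of_star_mul {B : Type} [NonUnitalNonAssocSemiring B] [StarAddMonoid B]
    {n : ℕ} (x : Fin n → B) : AlgPos (Matrix.of fun i j => star (x i) * x j) := by
  cases n with
  | zero => exact ⟨0, ![], Subsingleton.elim _ _⟩
  | succ n =>
    refine ⟨1, ![Matrix.of fun l j => if l = 0 then x j else 0], ?_⟩
    ext i j
    simp [Matrix.mul_apply, apply_ite star, ite_mul]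

lemma IsLinearSesqValued.map_sum {B V A ι : Type} [AddCommGroup B] [Module ℂ B]
    [AddCommGroup V] [Module ℂ V] [AddCommGroup A] [Module ℂ A] {E : B → V → V → A}
    (hE : IsLinearSesqValued E) (s : Finset ι) (g : ι → B) (v v' : V) :
    E (∑ m ∈ s, g m) v v' = ∑ m ∈ s, E (g m) v v' :=
  _root_.map_sum (AddMonoidHom.mk' (fun b => E b v v') fun b b' => hE.map_add b b' v v') g s

lemma kernelPosDef_of_compPos {A B V : Type} [NonUnitalRing A] [StarRing A]
    [NonUnitalRing B] [StarRing B] [AddCommGroup V] [Module ℂ V]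
    {E : B → V → V → A} (hE : CompPos E) :
    KernelPosDef (fun b b' : B => E (star b * b')) :=
  fun n x v => hE n _ (Matrix.algPos_of_star_mul x) v

lemma compPos_of_kernelPosDef {A B V : Type} [NonUnitalRing A] [Module ℂ A] [StarRing A]
    [NonUnitalRing B] [Module ℂ B] [StarRing B] [AddCommGroup V] [Module ℂ V]
    {E : B → V → V → A} (hlin : IsLinearSesqValued E)
    (hE : KernelPosDef (fun b b' : B => E (star b * b'))) : CompPos E := by
  rintro n b ⟨k, M, rfl⟩ v
  have hsplit : (Matrix.of fun i j => E ((∑ m, star (M m) * M m) i j) (v i) (v j))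
      = ∑ m : Fin k, ∑ l : Fin n,
          Matrix.of fun i j => E (star (M m l i) * M m l j) (v i) (v j) := by
    ext i j
    simp only [Matrix.of_apply, Matrix.sum_apply, Matrix.mul_apply, Matrix.star_apply,
      hlin.map_sum]
  rw [hsplit]
  exact algPos_sum _ _ fun m _ => algPos_sum _ _ fun l _ => hE n (M m l) v

theorem statement12_general (A B V : Type)
    [NonUnitalRing A] [Module ℂ A] [StarRing A]
    [NonUnitalRing B] [Module ℂ B] [StarRing B]
    [AddCommGroup V] [Module ℂ V]
    (E : B → V → V → A) (hlin : IsLinearSesqValued E) :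
    CompPos E ↔ KernelPosDef (fun b b' : B => E (star b * b')) :=
  ⟨kernelPosDef_of_compPos, compPos_of_kernelPosDef hlin⟩

/-- A ℂ-linear map `E : B → S_ℂ(V;A)` between *-algebras is completely positive if and
only if the kernel `Ẽ(b,b') = E(b* b')` on `B × B` is positive definite. -/
theorem statement12 (A B V : Type)
    [NonUnitalRing A] [Module ℂ A] [StarRing A] [StarModule ℂ A]
    [SMulCommClass ℂ A A] [IsScalarTower ℂ A A]
    [NonUnitalRing B] [Module ℂ B] [StarRing B] [StarModule ℂ B]
    [SMulCommClass ℂ B B] [IsScalarTower ℂ B B]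
    [AddCommGroup V] [Module ℂ V]
    (E : B → V → V → A) (hlin : IsLinearSesqValued E)
    (hsesq : ∀ b, IsSesq (E b)) :
    CompPos E ↔ KernelPosDef (fun b b' : B => E (star b * b')) :=
  statement12_general A B V E hlin
end

section
/- Let A and B be C*-algebras, V a complex vector space, and E : B → S_ℂ(V;A) a positive ℂ-linear map, i.e. E(b)(v,v) ≥ 0 in A for every positive b ∈ B and every v ∈ V. Then for all v, v' ∈ V the ℂ-linear map E_{v,v'} : B → A defined by E_{v,v'}(b) = E(b)(v,v') is bounded (continuous). -/
open scoped ComplexStarModule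

section aux

variable {B : Type} [NonUnitalCStarAlgebra B] [PartialOrder B] [StarOrderedRing B]

lemma aux_norm_realPart_le (a : B) : ‖(ℜ a : B)‖ ≤ ‖a‖ := by
  rw [realPart_apply_coe]
  calc ‖(2:ℝ)⁻¹ • (a + star a)‖ ≤ (2:ℝ)⁻¹ * ‖a + star a‖ := by
        rw [norm_smul]; simp
    _ ≤ (2:ℝ)⁻¹ * (‖a‖ + ‖star a‖) := by gcongr; exact norm_add_le _ _
    _ = ‖a‖ := by rw [norm_star]; ring

lemma aux_norm_imaginaryPart_le (a : B) : ‖(ℑ a : B)‖ ≤ ‖a‖ := by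
  rw [imaginaryPart_apply_coe]
  calc ‖-Complex.I • (2:ℝ)⁻¹ • (a - star a)‖ = (2:ℝ)⁻¹ * ‖a - star a‖ := by
        rw [norm_smul, norm_smul]; simp
    _ ≤ (2:ℝ)⁻¹ * (‖a‖ + ‖star a‖) := by gcongr; exact norm_sub_le _ _
    _ = ‖a‖ := by rw [norm_star]; ring

lemma aux_norm_posPart_le (a : B) (ha : IsSelfAdjoint a) : ‖a⁺‖ ≤ ‖a‖ := by
  rw [CFC.posPart_def]
  refine norm_cfcₙ_le fun x hx => ?_
  have hxa : ‖x‖ ≤ ‖a‖ := by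
    have := norm_apply_le_norm_cfcₙ (id : ℝ → ℝ) a hx
    simpa [cfcₙ_id ℝ a] using this
  refine le_trans ?_ hxa
  rw [Real.norm_eq_abs, Real.norm_eq_abs, abs_of_nonneg (posPart_nonneg x)]
  exact sup_le (le_abs_self x) (abs_nonneg x)

lemma aux_norm_negPart_le (a : B) (ha : IsSelfAdjoint a) : ‖a⁻‖ ≤ ‖a‖ := by
  rw [← CFC.posPart_neg a]
  simpa using aux_norm_posPart_le (-a) ha.neg

end aux

section posmap

variable {A B : Type} [NonUnitalCStarAlgebra A] [PartialOrder A] [StarOrderedRing A]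
  [NonUnitalCStarAlgebra B] [PartialOrder B] [StarOrderedRing B]

/-- A positive linear map between C*-algebras is bounded on the positive cone. -/
lemma aux_pos_cone_bound (φ : B → A)
    (hadd : ∀ b b', φ (b + b') = φ b + φ b')
    (hsmul : ∀ (c : ℂ) b, φ (c • b) = c • φ b)
    (hpos : ∀ b, 0 ≤ b → 0 ≤ φ b) :
    ∃ M : ℝ, 0 ≤ M ∧ ∀ b : B, 0 ≤ b → ‖φ b‖ ≤ M * ‖b‖ := by
  have hrsmul : ∀ (r : ℝ) (x : B), φ (r • x) = r • φ x := by
    intro r x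
    rw [← Complex.coe_smul, hsmul, Complex.coe_smul]
  have hzero : φ 0 = 0 := by
    have := hsmul 0 0; simpa using this
  by_contra h
  push_neg at h
  have key : ∀ n : ℕ, ∃ c : B, 0 ≤ c ∧ ‖c‖ ≤ 1 ∧ (4 : ℝ) ^ n < ‖φ c‖ := by
    intro n
    obtain ⟨b, hb, hbn⟩ := h ((4:ℝ)^n) (by positivity)
    have hbne : b ≠ 0 := by
      rintro rfl
      rw [hzero] at hbn
      simp at hbn
    have hbnorm : 0 < ‖b‖ := norm_pos_iff.mpr hbne
    refine ⟨(‖b‖⁻¹ : ℝ) • b, smul_nonneg (by positivity) hb, ?_, ?_⟩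
    · rw [norm_smul, Real.norm_eq_abs, abs_of_nonneg (by positivity)]
      rw [inv_mul_le_iff₀ hbnorm]; simpa using le_refl ‖b‖
    · rw [hrsmul, norm_smul, Real.norm_eq_abs, abs_of_nonneg (by positivity)]
      calc (4:ℝ)^n = ‖b‖⁻¹ * ((4:ℝ)^n * ‖b‖) := by
            rw [mul_comm ((4:ℝ)^n) ‖b‖, inv_mul_cancel_left₀ hbnorm.ne']
        _ < ‖b‖⁻¹ * ‖φ b‖ := mul_lt_mul_of_pos_left hbn (inv_pos.mpr hbnorm)
  choose c hc0 hc1 hc4 using key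
  have hmono : ∀ x y : B, x ≤ y → φ x ≤ φ y := by
    intro x y hxy
    have hxy' : φ y = φ x + φ (y - x) := by
      rw [← hadd, add_sub_cancel]
    rw [hxy']
    simpa using add_le_add_left (hpos _ (sub_nonneg.mpr hxy)) (φ x)
  have hsummable : Summable (fun n : ℕ => ((2:ℝ)⁻¹ ^ n) • c n) := by
    apply Summable.of_norm
    apply Summable.of_nonneg_of_le (fun n => norm_nonneg _) (fun n => ?_)
      (summable_geometric_of_lt_one (by norm_num) (by norm_num) :
        Summable fun n : ℕ => (2:ℝ)⁻¹ ^ n)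
    rw [norm_smul, Real.norm_eq_abs, abs_of_nonneg (by positivity)]
    calc (2:ℝ)⁻¹ ^ n * ‖c n‖ ≤ (2:ℝ)⁻¹ ^ n * 1 := by gcongr; exact hc1 n
      _ = (2:ℝ)⁻¹ ^ n := mul_one _
  set b : B := ∑' n, ((2:ℝ)⁻¹ ^ n) • c n with hb
  have hterm : ∀ n, ((2:ℝ)⁻¹ ^ n) • c n ≤ b :=
    fun n => Summable.le_tsum hsummable n (fun m _ => smul_nonneg (by positivity) (hc0 m))
  have hcontra : ∀ n : ℕ, (2:ℝ) ^ n ≤ ‖φ b‖ := by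
    intro n
    have h1 : φ (((2:ℝ)⁻¹ ^ n) • c n) ≤ φ b := hmono _ _ (hterm n)
    have h0 : 0 ≤ φ (((2:ℝ)⁻¹ ^ n) • c n) := hpos _ (smul_nonneg (by positivity) (hc0 n))
    have h2 : ‖φ (((2:ℝ)⁻¹ ^ n) • c n)‖ ≤ ‖φ b‖ :=
      CStarAlgebra.norm_le_norm_of_nonneg_of_le h0 h1
    rw [hrsmul, norm_smul, Real.norm_eq_abs, abs_of_nonneg (by positivity)] at h2
    calc (2:ℝ)^n = (2:ℝ)⁻¹ ^ n * (4:ℝ)^n := by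
          rw [← mul_pow]; norm_num
      _ ≤ (2:ℝ)⁻¹ ^ n * ‖φ (c n)‖ := by gcongr; exact (hc4 n).le
      _ ≤ ‖φ b‖ := h2
  obtain ⟨n, hn⟩ := pow_unbounded_of_one_lt ‖φ b‖ (by norm_num : (1:ℝ) < 2)
  exact absurd (hcontra n) (not_le.mpr hn)

/-- A positive linear map between C*-algebras is bounded. -/
lemma aux_full_bound (φ : B → A)
    (hadd : ∀ b b', φ (b + b') = φ b + φ b')
    (hsmul : ∀ (c : ℂ) b, φ (c • b) = c • φ b)
    (hpos : ∀ b, 0 ≤ b → 0 ≤ φ b) :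
    ∃ C : ℝ, 0 ≤ C ∧ ∀ b : B, ‖φ b‖ ≤ C * ‖b‖ := by
  obtain ⟨M, hM, hMb⟩ := aux_pos_cone_bound φ hadd hsmul hpos
  refine ⟨4 * M, by positivity, fun b => ?_⟩
  have hneg : ∀ x, φ (-x) = -φ x := by
    intro x
    have := hsmul (-1) x
    simpa using this
  have hsub : ∀ x y, φ (x - y) = φ x - φ y := by
    intro x y
    rw [sub_eq_add_neg, hadd, hneg, sub_eq_add_neg]
  have hdecomp := CStarAlgebra.linear_combination_nonneg b
  have hφ : φ b = φ ((ℜ b : B)⁺) - φ ((ℜ b : B)⁻)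
      + (Complex.I • φ ((ℑ b : B)⁺) - Complex.I • φ ((ℑ b : B)⁻)) := by
    conv_lhs => rw [← hdecomp]
    rw [hadd, hsub, hsub, hsmul, hsmul]
  have k1 : ‖φ ((ℜ b : B)⁺)‖ ≤ M * ‖b‖ :=
    (hMb _ (CFC.posPart_nonneg _)).trans (by
      gcongr
      exact (aux_norm_posPart_le _ (ℜ b).2).trans (aux_norm_realPart_le b))
  have k2 : ‖φ ((ℜ b : B)⁻)‖ ≤ M * ‖b‖ :=
    (hMb _ (CFC.negPart_nonneg _)).trans (by
      gcongr
      exact (aux_norm_negPart_le _ (ℜ b).2).trans (aux_norm_realPart_le b))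
  have k3 : ‖φ ((ℑ b : B)⁺)‖ ≤ M * ‖b‖ :=
    (hMb _ (CFC.posPart_nonneg _)).trans (by
      gcongr
      exact (aux_norm_posPart_le _ (ℑ b).2).trans (aux_norm_imaginaryPart_le b))
  have k4 : ‖φ ((ℑ b : B)⁻)‖ ≤ M * ‖b‖ :=
    (hMb _ (CFC.negPart_nonneg _)).trans (by
      gcongr
      exact (aux_norm_negPart_le _ (ℑ b).2).trans (aux_norm_imaginaryPart_le b))
  rw [hφ]
  calc ‖_‖ ≤ ‖φ ((ℜ b : B)⁺) - φ ((ℜ b : B)⁻)‖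
      + ‖Complex.I • φ ((ℑ b : B)⁺) - Complex.I • φ ((ℑ b : B)⁻)‖ := norm_add_le _ _
    _ ≤ (‖φ ((ℜ b : B)⁺)‖ + ‖φ ((ℜ b : B)⁻)‖)
      + (‖Complex.I • φ ((ℑ b : B)⁺)‖ + ‖Complex.I • φ ((ℑ b : B)⁻)‖) := by
        gcongr <;> exact norm_sub_le _ _
    _ = ‖φ ((ℜ b : B)⁺)‖ + ‖φ ((ℜ b : B)⁻)‖ + (‖φ ((ℑ b : B)⁺)‖ + ‖φ ((ℑ b : B)⁻)‖) := by
        rw [norm_smul, norm_smul]; simp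
    _ ≤ M * ‖b‖ + M * ‖b‖ + (M * ‖b‖ + M * ‖b‖) := by gcongr
    _ = (4 * M) * ‖b‖ := by ring

end posmap

/-- Polarization identity for sesquilinear maps. -/
lemma aux_sesq_polar {V A : Type} [AddCommGroup V] [Module ℂ V] [AddCommGroup A] [Module ℂ A]
    (s : V → V → A) (hs : IsSesq s) (v v' : V) :
    (4:ℂ) • s v v' =
      s (v + v') (v + v') - s (v - v') (v - v')
      - Complex.I • s (v + Complex.I • v') (v + Complex.I • v')
      + Complex.I • s (v - Complex.I • v') (v - Complex.I • v') := by
  have hsub : ∀ w : V, v - w = v + (-1 : ℂ) • w := by intro w; rw [neg_one_smul]; abel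
  rw [hsub v', hsub (Complex.I • v')]
  simp only [hs.add_left, hs.add_right, hs.smul_left, hs.smul_right, map_mul, map_neg, map_one,
    Complex.conj_I, smul_smul, smul_add, smul_sub]
  match_scalars <;> simp [Complex.ext_iff] <;> norm_num

/-- If `E : B → S_ℂ(V;A)` is a positive ℂ-linear map between C*-algebras, then each of
the ℂ-linear maps `E_{v,v'} : b ↦ E(b)(v,v')` is bounded. -/
theorem statement14 (A B V : Type)
    [NonUnitalCStarAlgebra A] [PartialOrder A] [StarOrderedRing A]
    [NonUnitalCStarAlgebra B] [PartialOrder B] [StarOrderedRing B]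
    [AddCommGroup V] [Module ℂ V]
    (E : B → V → V → A) (hlin : IsLinearSesqValued E)
    (hsesq : ∀ b, IsSesq (E b))
    (hpos : ∀ b : B, 0 ≤ b → ∀ v, 0 ≤ E b v v) :
    ∀ v v' : V, ∃ C : ℝ, ∀ b : B, ‖E b v v'‖ ≤ C * ‖b‖ := by
  intro v v'
  -- bounds for the four diagonal maps
  have diag : ∀ w : V, ∃ C : ℝ, 0 ≤ C ∧ ∀ b : B, ‖E b w w‖ ≤ C * ‖b‖ := by
    intro w
    exact aux_full_bound (fun b => E b w w)
      (fun b b' => hlin.map_add b b' w w)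
      (fun c b => hlin.map_smul c b w w)
      (fun b hb => hpos b hb w)
  obtain ⟨C₁, hC₁0, hC₁⟩ := diag (v + v')
  obtain ⟨C₂, hC₂0, hC₂⟩ := diag (v - v')
  obtain ⟨C₃, hC₃0, hC₃⟩ := diag (v + Complex.I • v')
  obtain ⟨C₄, hC₄0, hC₄⟩ := diag (v - Complex.I • v')
  refine ⟨(C₁ + C₂ + C₃ + C₄) / 4, fun b => ?_⟩
  have hp := aux_sesq_polar (E b) (hsesq b) v v'
  have h4 : (4:ℝ) * ‖E b v v'‖ = ‖(4:ℂ) • E b v v'‖ := by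
    rw [norm_smul]; norm_num
  have : (4:ℝ) * ‖E b v v'‖ ≤ (C₁ + C₂ + C₃ + C₄) * ‖b‖ := by
    rw [h4, hp]
    calc ‖_‖ ≤ ‖E b (v + v') (v + v') - E b (v - v') (v - v')
          - Complex.I • E b (v + Complex.I • v') (v + Complex.I • v')‖
          + ‖Complex.I • E b (v - Complex.I • v') (v - Complex.I • v')‖ := norm_add_le _ _
      _ ≤ (‖E b (v + v') (v + v') - E b (v - v') (v - v')‖
          + ‖Complex.I • E b (v + Complex.I • v') (v + Complex.I • v')‖)
          + ‖Complex.I • E b (v - Complex.I • v') (v - Complex.I • v')‖ := by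
            gcongr; exact norm_sub_le _ _
      _ ≤ ((‖E b (v + v') (v + v')‖ + ‖E b (v - v') (v - v')‖)
          + ‖Complex.I • E b (v + Complex.I • v') (v + Complex.I • v')‖)
          + ‖Complex.I • E b (v - Complex.I • v') (v - Complex.I • v')‖ := by
            gcongr; exact norm_sub_le _ _
      _ = ‖E b (v + v') (v + v')‖ + ‖E b (v - v') (v - v')‖
          + ‖E b (v + Complex.I • v') (v + Complex.I • v')‖
          + ‖E b (v - Complex.I • v') (v - Complex.I • v')‖ := by
            rw [norm_smul, norm_smul]; simp
      _ ≤ C₁ * ‖b‖ + C₂ * ‖b‖ + C₃ * ‖b‖ + C₄ * ‖b‖ := by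
            gcongr <;> [exact hC₁ b; exact hC₂ b; exact hC₃ b; exact hC₄ b]
      _ = (C₁ + C₂ + C₃ + C₄) * ‖b‖ := by ring
  linarith
end
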